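/- arXiv:1404.1633 — 4 statements merged into one kernel-verified Lean document; each statement's English description precedes it below -/
import Mathlib

section
/- Let n ≥ 1, let 0 < β < n be constant, let 1 < q₁ < n/β and define q₂ by 1/q₂ = 1/q₁ − β/n. Then there exists a constant C > 0 such that for every locally integrable function f on ℝⁿ and every k ∈ ℤ, ‖(H_β f)·χ_k‖_{L^{q₂}(ℝⁿ)} ≤ C Σ_{j=−∞}^{k} 2^{(j−k) n (1 − 1/q₁)} ‖f χ_j‖_{L^{q₁}(ℝⁿ)}. (This is the constant-exponent version of the key block estimate (3.3) in the proof of Theorem 3.1.) -/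
open MeasureTheory ENNReal

/-- The dyadic annulus `A_k = B_k \ B_{k-1} = {x : 2^(k-1) < ‖x‖ ≤ 2^k}` in `ℝⁿ`. -/
def annulus (n : ℕ) (k : ℤ) : Set (EuclideanSpace ℝ (Fin n)) :=
  {x | (2 : ℝ) ^ (k - 1) < ‖x‖ ∧ ‖x‖ ≤ (2 : ℝ) ^ k}

/-- The n-dimensional fractional Hardy operator
`H_β f(x) = |x|^{β−n} ∫_{|t|<|x|} f(t) dt`. -/
noncomputable def hardyOp (n : ℕ) (β : ℝ) (f : EuclideanSpace ℝ (Fin n) → ℝ)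
    (x : EuclideanSpace ℝ (Fin n)) : ℝ :=
  ‖x‖ ^ (β - n) * ∫ t in {t : EuclideanSpace ℝ (Fin n) | ‖t‖ < ‖x‖}, f t

/-! On `A_k` one has `|x|^{β-n} ≤ 2^{(k-1)(β-n)}`, and the ball `|t| < |x|` is covered, up to the
null set `{0}`, by the annuli `A_j`, `j ≤ k`; hence `|H_β f| ≤ 2^{(k-1)(β-n)} Σ_{j≤k} ‖f χ_j‖₁` on
`A_k`. Hölder's inequality gives `‖f χ_j‖₁ ≤ |A_j|^{1-1/q₁} ‖f χ_j‖_{q₁}`, and the sup bound on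
`A_k` costs a factor `|A_k|^{1/q₂}`. Since `|A_j| ≤ 2^{jn} |B_0|` and `n/q₂ = n/q₁ - β`, the
powers of two collapse to `2^{n-β} 2^{(j-k)n(1-1/q₁)}`. -/

section

variable {α ε : Type*} [MeasurableSpace α] {μ : Measure α} {s : Set α}

lemma eLpNorm_indicator_le_of_forall_mem_enorm_le [TopologicalSpace ε] [ESeminormedAddMonoid ε]
    (hs : MeasurableSet s) {g : α → ε} {C : ℝ≥0∞} (hC : ∀ x ∈ s, ‖g x‖ₑ ≤ C) (p : ℝ≥0∞) :
    eLpNorm (s.indicator g) p μ ≤ C * μ s ^ p.toReal⁻¹ := by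
  rw [eLpNorm_indicator_eq_eLpNorm_restrict hs]
  simpa using eLpNorm_le_of_ae_enorm_bound (p := p) ((ae_restrict_iff' hs).mpr (.of_forall hC))

lemma setLIntegral_enorm_le_eLpNorm_indicator_mul [NormedAddCommGroup ε] (hs : MeasurableSet s)
    {f : α → ε} (hf : AEStronglyMeasurable f μ) {p : ℝ≥0∞} (hp : 1 ≤ p) :
    ∫⁻ x in s, ‖f x‖ₑ ∂μ ≤ eLpNorm (s.indicator f) p μ * μ s ^ (1 - 1 / p.toReal) := by
  rw [← eLpNorm_one_eq_lintegral_enorm, eLpNorm_indicator_eq_eLpNorm_restrict hs]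
  simpa using eLpNorm_le_eLpNorm_mul_rpow_measure_univ hp hf.restrict

end

lemma ofReal_two_zpow_rpow (k : ℤ) (s : ℝ) :
    ENNReal.ofReal (((2 : ℝ) ^ k) ^ s) = (2 : ℝ≥0∞) ^ ((k : ℝ) * s) := by
  rw [← Real.rpow_intCast, ← Real.rpow_mul zero_le_two, ← ENNReal.ofReal_rpow_of_pos two_pos,
    ENNReal.ofReal_ofNat]

section

variable {n : ℕ}

lemma measurableSet_annulus (n : ℕ) (k : ℤ) : MeasurableSet (annulus n k) :=
  (measurableSet_lt measurable_const measurable_norm).inter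
    (measurableSet_le measurable_norm measurable_const)

lemma exists_mem_annulus {x : EuclideanSpace ℝ (Fin n)} (hx : x ≠ 0) :
    ∃ j : ℤ, x ∈ annulus n j := by
  obtain ⟨j, hj⟩ := exists_mem_Ioc_zpow (norm_pos_iff.mpr hx) _root_.one_lt_two
  exact ⟨j + 1, by simpa [annulus] using hj⟩

lemma le_of_mem_annulus_of_norm_le {x : EuclideanSpace ℝ (Fin n)} {j k : ℤ} (hx : x ∈ annulus n j)
    (hk : ‖x‖ ≤ 2 ^ k) : j ≤ k := by
  have := (zpow_lt_zpow_iff_right₀ _root_.one_lt_two).mp (hx.1.trans_le hk)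
  omega

lemma setLIntegral_norm_le_zpow_le_tsum_annulus [NeZero n] (g : EuclideanSpace ℝ (Fin n) → ℝ≥0∞)
    (k : ℤ) :
    ∫⁻ t in {t | ‖t‖ ≤ (2 : ℝ) ^ k}, g t ≤ ∑' j : {j : ℤ // j ≤ k}, ∫⁻ t in annulus n j, g t := by
  have hsub : {t | ‖t‖ ≤ (2 : ℝ) ^ k} \ ⋃ j : {j : ℤ // j ≤ k}, annulus n j ⊆ {0} := by
    rintro t ⟨ht, hnot⟩
    by_contra ht0
    obtain ⟨j, hj⟩ := exists_mem_annulus ht0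
    exact hnot (Set.mem_iUnion.mpr ⟨⟨j, le_of_mem_annulus_of_norm_le hj ht⟩, hj⟩)
  calc ∫⁻ t in {t | ‖t‖ ≤ (2 : ℝ) ^ k}, g t
      ≤ ∫⁻ t in ⋃ j : {j : ℤ // j ≤ k}, annulus n j, g t :=
        lintegral_mono_set' (ae_le_set.mpr (measure_mono_null hsub (measure_singleton 0)))
    _ ≤ ∑' j : {j : ℤ // j ≤ k}, ∫⁻ t in annulus n j, g t := lintegral_iUnion_le _ _

lemma volume_annulus_rpow_le (j : ℤ) {s : ℝ} (hs : 0 ≤ s) :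
    volume (annulus n j) ^ s ≤
      (2 : ℝ≥0∞) ^ ((j : ℝ) * n * s) *
        volume (Metric.ball (0 : EuclideanSpace ℝ (Fin n)) 1) ^ s := by
  have hsub : annulus n j ⊆ Metric.closedBall 0 ((2 : ℝ) ^ j) := fun x hx => by
    simpa using hx.2
  have hvol : volume (annulus n j) ≤
      (2 : ℝ≥0∞) ^ ((j : ℝ) * n) * volume (Metric.ball (0 : EuclideanSpace ℝ (Fin n)) 1) := by
    refine (measure_mono hsub).trans_eq ?_
    rw [Measure.addHaar_closedBall _ _ (by positivity), finrank_euclideanSpace_fin,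
      ← Real.rpow_natCast, ofReal_two_zpow_rpow]
  calc volume (annulus n j) ^ s
      ≤ ((2 : ℝ≥0∞) ^ ((j : ℝ) * n) *
          volume (Metric.ball (0 : EuclideanSpace ℝ (Fin n)) 1)) ^ s :=
        ENNReal.rpow_le_rpow hvol hs
    _ = _ := by rw [ENNReal.mul_rpow_of_nonneg _ _ hs, ← ENNReal.rpow_mul]

lemma setLIntegral_annulus_enorm_le {F : Type*} [NormedAddCommGroup F] {q : ℝ} (hq : 1 ≤ q)
    {f : EuclideanSpace ℝ (Fin n) → F} (hf : AEStronglyMeasurable f volume) (j : ℤ) :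
    ∫⁻ t in annulus n j, ‖f t‖ₑ ≤ eLpNorm ((annulus n j).indicator f) (ENNReal.ofReal q) volume *
      ((2 : ℝ≥0∞) ^ ((j : ℝ) * n * (1 - 1 / q)) *
        volume (Metric.ball (0 : EuclideanSpace ℝ (Fin n)) 1) ^ (1 - 1 / q)) := by
  refine (setLIntegral_enorm_le_eLpNorm_indicator_mul (measurableSet_annulus n j) hf
    (ENNReal.one_le_ofReal.mpr hq)).trans ?_
  rw [ENNReal.toReal_ofReal (by linarith)]
  gcongr
  exact volume_annulus_rpow_le j (sub_nonneg.mpr ((div_le_one (by linarith)).mpr hq))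

lemma enorm_hardyOp_le [NeZero n] {β : ℝ} (hβn : β ≤ n)
    (f : EuclideanSpace ℝ (Fin n) → ℝ) {k : ℤ} {x : EuclideanSpace ℝ (Fin n)}
    (hx : x ∈ annulus n k) :
    ‖hardyOp n β f x‖ₑ ≤ (2 : ℝ≥0∞) ^ (((k - 1 : ℤ) : ℝ) * (β - n)) *
      ∑' j : {j : ℤ // j ≤ k}, ∫⁻ t in annulus n j, ‖f t‖ₑ := by
  rw [hardyOp, enorm_mul]
  gcongr
  · rw [Real.enorm_eq_ofReal (by positivity), ← ofReal_two_zpow_rpow]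
    exact ENNReal.ofReal_le_ofReal
      (Real.rpow_le_rpow_of_nonpos (by positivity) hx.1.le (sub_nonpos.mpr hβn))
  · refine (enorm_integral_le_lintegral_enorm _).trans
      ((lintegral_mono_set fun t ht => ?_).trans (setLIntegral_norm_le_zpow_le_tsum_annulus _ k))
    exact (le_of_lt ht).trans hx.2

lemma eLpNorm_indicator_hardyOp_annulus_le [NeZero n] {β q₁ q₂ : ℝ} (hβn : β ≤ n)
    (hq₁ : 1 ≤ q₁) (hq₂0 : 0 < q₂) (hq₂ : 1 / q₂ = 1 / q₁ - β / n)
    {f : EuclideanSpace ℝ (Fin n) → ℝ} (hf : AEStronglyMeasurable f volume) (k : ℤ) :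
    eLpNorm ((annulus n k).indicator (hardyOp n β f)) (ENNReal.ofReal q₂) volume ≤
      ∑' j : {j : ℤ // j ≤ k},
        (2 : ℝ≥0∞) ^ ((n : ℝ) - β) *
          volume (Metric.ball (0 : EuclideanSpace ℝ (Fin n)) 1) ^ (1 - 1 / q₁ + 1 / q₂) *
          ((2 : ℝ≥0∞) ^ (((((j : ℤ) - k : ℤ)) : ℝ) * ((n : ℝ) * (1 - 1 / q₁))) *
            eLpNorm ((annulus n j).indicator f) (ENNReal.ofReal q₁) volume) := by
  set V := volume (Metric.ball (0 : EuclideanSpace ℝ (Fin n)) 1)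
  set r := 1 - 1 / q₁
  have hr : 0 ≤ r := sub_nonneg.mpr ((div_le_one (by linarith)).mpr hq₁)
  have hpow (j : ℤ) : (2 : ℝ≥0∞) ^ (((k - 1 : ℤ) : ℝ) * (β - n)) * 2 ^ ((k : ℝ) * n * (1 / q₂)) *
      2 ^ ((j : ℝ) * n * r) = 2 ^ ((n : ℝ) - β) * 2 ^ (((j - k : ℤ) : ℝ) * (n * r)) := by
    have : (n : ℝ) * (1 / q₂) = n * (1 / q₁) - β := by
      rw [hq₂]; field_simp [NeZero.ne n]
    simp only [← ENNReal.rpow_add _ _ two_ne_zero ofNat_ne_top]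
    congr 1
    simp only [r]; push_cast; linear_combination (k : ℝ) * this
  calc eLpNorm ((annulus n k).indicator (hardyOp n β f)) (ENNReal.ofReal q₂) volume
      ≤ (2 ^ (((k - 1 : ℤ) : ℝ) * (β - n)) *
          ∑' j : {j : ℤ // j ≤ k}, ∫⁻ t in annulus n j, ‖f t‖ₑ) *
            volume (annulus n k) ^ (1 / q₂) := by
        simpa [ENNReal.toReal_ofReal hq₂0.le] using eLpNorm_indicator_le_of_forall_mem_enorm_le
          (measurableSet_annulus n k) (fun x hx => enorm_hardyOp_le hβn f hx) (ENNReal.ofReal q₂)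
    _ ≤ (2 ^ (((k - 1 : ℤ) : ℝ) * (β - n)) * ∑' j : {j : ℤ // j ≤ k},
          eLpNorm ((annulus n j).indicator f) (ENNReal.ofReal q₁) volume *
            (2 ^ ((j : ℝ) * n * r) * V ^ r)) * (2 ^ ((k : ℝ) * n * (1 / q₂)) * V ^ (1 / q₂)) := by
        gcongr with j
        · exact setLIntegral_annulus_enorm_le hq₁ hf j
        · exact volume_annulus_rpow_le k (by positivity)
    _ = _ := by
        rw [← ENNReal.tsum_mul_left, ← ENNReal.tsum_mul_right]
        congr 1; funext j
        rw [ENNReal.rpow_add_of_nonneg _ _ hr (by positivity)]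
        calc _ = (2 ^ (((k - 1 : ℤ) : ℝ) * (β - n)) * 2 ^ ((k : ℝ) * n * (1 / q₂)) *
              2 ^ ((j : ℝ) * n * r)) * (V ^ r * V ^ (1 / q₂)) *
                eLpNorm ((annulus n j).indicator f) (ENNReal.ofReal q₁) volume := by ring
          _ = _ := by rw [hpow]; ring

theorem fractionalHardy_block_estimate_general
    (n : ℕ) (β q₁ q₂ : ℝ)
    (hβ0 : 0 < β) (hβn : β < n)
    (hq₁ : 1 < q₁) (hq₁' : q₁ < n / β)
    (hq₂ : 1 / q₂ = 1 / q₁ - β / n) :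
    ∃ C : ℝ, 0 < C ∧
      ∀ f : EuclideanSpace ℝ (Fin n) → ℝ, LocallyIntegrable f volume →
        ∀ k : ℤ,
          eLpNorm ((annulus n k).indicator (hardyOp n β f)) (ENNReal.ofReal q₂) volume ≤
            ENNReal.ofReal C *
              ∑' j : {j : ℤ // j ≤ k},
                (2 : ℝ≥0∞) ^ (((((j : ℤ) - k : ℤ)) : ℝ) * ((n : ℝ) * (1 - 1 / q₁))) *
                  eLpNorm ((annulus n j).indicator f) (ENNReal.ofReal q₁) volume := by
  have hn : (0 : ℝ) < n := hβ0.trans hβn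
  have : NeZero n := ⟨by exact_mod_cast hn.ne'⟩
  have hq₂0 : 0 < q₂ := by
    rw [← one_div_pos, hq₂, sub_pos, div_lt_div_iff₀ hn (by linarith)]
    linarith [(lt_div_iff₀ hβ0).mp hq₁']
  set V := volume (Metric.ball (0 : EuclideanSpace ℝ (Fin n)) 1)
  have hV : V ≠ 0 := (Metric.measure_ball_pos volume 0 one_pos).ne'
  have hV' : V ≠ ⊤ := measure_ball_lt_top.ne
  set C : ℝ≥0∞ := 2 ^ ((n : ℝ) - β) * V ^ (1 - 1 / q₁ + 1 / q₂)
  have hC : C ≠ ⊤ := mul_ne_top (rpow_ne_top_of_nonneg (by linarith) ofNat_ne_top)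
    (rpow_ne_top_of_ne_zero hV hV')
  have hC0 : C ≠ 0 := mul_ne_zero (by positivity) (rpow_pos hV.bot_lt hV').ne'
  refine ⟨C.toReal, toReal_pos hC0 hC, fun f hf k => ?_⟩
  rw [ofReal_toReal hC, ← ENNReal.tsum_mul_left]
  exact eLpNorm_indicator_hardyOp_annulus_le hβn.le hq₁.le hq₂0 hq₂ hf.aestronglyMeasurable k

/-- The constant-exponent version of the key block estimate (3.3) in the proof of
Theorem 3.1:
`‖(H_β f) χ_k‖_{L^{q₂}} ≤ C Σ_{j≤k} 2^{(j−k)n(1−1/q₁)} ‖f χ_j‖_{L^{q₁}}`. -/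
theorem fractionalHardy_block_estimate
    (n : ℕ) (hn : 1 ≤ n) (β q₁ q₂ : ℝ)
    (hβ0 : 0 < β) (hβn : β < n)
    (hq₁ : 1 < q₁) (hq₁' : q₁ < n / β)
    (hq₂ : 1 / q₂ = 1 / q₁ - β / n) :
    ∃ C : ℝ, 0 < C ∧
      ∀ f : EuclideanSpace ℝ (Fin n) → ℝ, LocallyIntegrable f volume →
        ∀ k : ℤ,
          eLpNorm ((annulus n k).indicator (hardyOp n β f)) (ENNReal.ofReal q₂) volume ≤
            ENNReal.ofReal C *
              ∑' j : {j : ℤ // j ≤ k},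
                (2 : ℝ≥0∞) ^ (((((j : ℤ) - k : ℤ)) : ℝ) * ((n : ℝ) * (1 - 1 / q₁))) *
                  eLpNorm ((annulus n j).indicator f) (ENNReal.ofReal q₁) volume :=
  fractionalHardy_block_estimate_general n β q₁ q₂ hβ0 hβn hq₁ hq₁' hq₂
end
end

section
/- Let n ≥ 1 and let β₀, β₁ be constants with 0 < β₀ ≤ β₁ < n. Then there exists a constant C > 0 such that for every β ∈ [β₀, β₁], every R > 0, and every x ∈ ℝⁿ with |x| ≤ R, one has ∫_{|y| ≤ R} |x − y|^{β − n} dy ≥ C |x|^{β}. (This is the lower bound (3.2)/(3.7) for the Riesz-type potential of the characteristic function of a ball, uniform in the radius.) -/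
/-!
The ball of radius `|x|/2` centred at `x/2` lies inside `{|y| ≤ |x|} ⊆ {|y| ≤ R}`, and every
point of it is within distance `|x|` of `x`. Since `β - n ≤ 0`, the kernel `|x - y|^(β-n)` is at
least `|x|^(β-n)` there, so the integral is at least `|x|^(β-n) · ω_n (|x|/2)^n = 2^(-n) ω_n |x|^β`,
with a constant independent of `β` and `R`.
-/
open MeasureTheory ENNReal Metric

theorem ENNReal.rpow_le_rpow_of_nonpos {a b : ℝ≥0∞} {p : ℝ} (hab : a ≤ b) (hp : p ≤ 0) :
    b ^ p ≤ a ^ p := by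
  obtain ⟨q, hq, rfl⟩ : ∃ q, 0 ≤ q ∧ p = -q := ⟨-p, neg_nonneg.mpr hp, (neg_neg p).symm⟩
  rw [ENNReal.rpow_neg, ENNReal.rpow_neg]
  exact ENNReal.inv_le_inv.mpr (ENNReal.rpow_le_rpow hab hq)

section

variable {E : Type*} [NormedAddCommGroup E] [NormedSpace ℝ E]

theorem closedBall_midpoint_subset_closedBall_left (a b : E) :
    closedBall (midpoint ℝ a b) (dist a b / 2) ⊆ closedBall a (dist a b) :=
  closedBall_subset_closedBall' (by rw [dist_midpoint_left, Real.norm_ofNat]; linarith)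

theorem closedBall_midpoint_subset_closedBall_right (a b : E) :
    closedBall (midpoint ℝ a b) (dist a b / 2) ⊆ closedBall b (dist a b) :=
  closedBall_subset_closedBall' (by rw [dist_midpoint_right, Real.norm_ofNat]; linarith)

variable [MeasurableSpace E] [BorelSpace E] [FiniteDimensional ℝ E]
  (μ : Measure E) [μ.IsAddHaarMeasure]

theorem ofReal_le_setLIntegral_closedBall_rpow_dist {x : E} (hx : x ≠ 0) {p : ℝ} (hp : p ≤ 0) :
    ENNReal.ofReal ((μ (ball 0 1)).toReal / 2 ^ Module.finrank ℝ E *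
        ‖x‖ ^ (Module.finrank ℝ E + p)) ≤
      ∫⁻ y in closedBall 0 ‖x‖, ENNReal.ofReal ‖x - y‖ ^ p ∂μ := by
  set d := Module.finrank ℝ E
  set S := closedBall (midpoint ℝ 0 x) (‖x‖ / 2)
  have hx₀ : 0 < ‖x‖ := norm_pos_iff.mpr hx
  have hS_sub : S ⊆ closedBall 0 ‖x‖ := by
    simpa using closedBall_midpoint_subset_closedBall_left (0 : E) x
  have hS_near : ∀ y ∈ S, ‖x - y‖ ≤ ‖x‖ := fun y hy => by
    have h := closedBall_midpoint_subset_closedBall_right (0 : E) x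
    rw [dist_zero_left] at h
    simpa [dist_eq_norm, norm_sub_rev] using h hy
  have hS_vol : μ S = ENNReal.ofReal ((‖x‖ / 2) ^ d) * μ (ball 0 1) :=
    Measure.addHaar_closedBall μ _ (by positivity)
  calc ENNReal.ofReal ((μ (ball 0 1)).toReal / 2 ^ d * ‖x‖ ^ (d + p))
      = ENNReal.ofReal ‖x‖ ^ p * μ S := by
        conv_rhs => rw [hS_vol, ← ENNReal.ofReal_toReal (measure_ball_lt_top (μ := μ)).ne,
          ENNReal.ofReal_rpow_of_pos hx₀, ← ENNReal.ofReal_mul (by positivity),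
          ← ENNReal.ofReal_mul (by positivity)]
        rw [Real.rpow_add hx₀, Real.rpow_natCast, div_pow]
        congr 1
        field_simp
    _ = ∫⁻ _ in S, ENNReal.ofReal ‖x‖ ^ p ∂μ := (setLIntegral_const _ _).symm
    _ ≤ ∫⁻ y in S, ENNReal.ofReal ‖x - y‖ ^ p ∂μ := setLIntegral_mono' measurableSet_closedBall
        fun y hy => ENNReal.rpow_le_rpow_of_nonpos (ENNReal.ofReal_le_ofReal (hS_near y hy)) hp
    _ ≤ _ := lintegral_mono_set hS_sub

end

theorem riesz_potential_ball_lower_bound_general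
    (n : ℕ) (β₀ β₁ : ℝ)
    (hβ₀ : 0 < β₀) (hβ₁ : β₁ < n) :
    ∃ C : ℝ, 0 < C ∧
      ∀ β ∈ Set.Icc β₀ β₁, ∀ R : ℝ, 0 < R →
        ∀ x : EuclideanSpace ℝ (Fin n), ‖x‖ ≤ R →
          ENNReal.ofReal (C * ‖x‖ ^ β) ≤
            ∫⁻ y in {y : EuclideanSpace ℝ (Fin n) | ‖y‖ ≤ R},
              (ENNReal.ofReal ‖x - y‖) ^ (β - (n : ℝ)) := by
  set v := (volume (ball (0 : EuclideanSpace ℝ (Fin n)) 1)).toReal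
  have hv : 0 < v := ENNReal.toReal_pos (measure_ball_pos _ _ one_pos).ne' measure_ball_lt_top.ne
  refine ⟨v / 2 ^ n, by positivity, ?_⟩
  rintro β ⟨hβ₀β, hββ₁⟩ R - x hxR
  rcases eq_or_ne x 0 with rfl | hx
  · simp [Real.zero_rpow (by linarith : β ≠ 0)]
  have hball : closedBall 0 ‖x‖ ⊆ {y : EuclideanSpace ℝ (Fin n) | ‖y‖ ≤ R} := fun y hy =>
    (mem_closedBall_zero_iff.mp hy).trans hxR
  calc ENNReal.ofReal (v / 2 ^ n * ‖x‖ ^ β)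
      ≤ ∫⁻ y in closedBall 0 ‖x‖, ENNReal.ofReal ‖x - y‖ ^ (β - n) := by
        simpa using ofReal_le_setLIntegral_closedBall_rpow_dist volume hx (p := β - n) (by linarith)
    _ ≤ _ := lintegral_mono_set hball

/-- The lower bound (3.2)/(3.7): for `0 < β₀ ≤ β ≤ β₁ < n`, uniformly in the radius `R`,
`∫_{|y|≤R} |x−y|^{β−n} dy ≥ C |x|^β` whenever `|x| ≤ R`.  The integrand is interpreted
in `[0,∞]` (so it is `+∞` at `y = x`). -/
theorem riesz_potential_ball_lower_bound
    (n : ℕ) (hn : 1 ≤ n) (β₀ β₁ : ℝ)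
    (hβ₀ : 0 < β₀) (hβ₀₁ : β₀ ≤ β₁) (hβ₁ : β₁ < n) :
    ∃ C : ℝ, 0 < C ∧
      ∀ β ∈ Set.Icc β₀ β₁, ∀ R : ℝ, 0 < R →
        ∀ x : EuclideanSpace ℝ (Fin n), ‖x‖ ≤ R →
          ENNReal.ofReal (C * ‖x‖ ^ β) ≤
            ∫⁻ y in {y : EuclideanSpace ℝ (Fin n) | ‖y‖ ≤ R},
              (ENNReal.ofReal ‖x - y‖) ^ (β - (n : ℝ)) :=
  riesz_potential_ball_lower_bound_general n β₀ β₁ hβ₀ hβ₁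
end

section
/- Let λ ≥ 0, 0 < p < ∞, d > 0, and α < λ + d. Then there exists a constant C > 0 (depending only on λ, p, d, α) such that for every sequence (a_j)_{j∈ℤ} of nonnegative reals, sup_{k₀∈ℤ} 2^{−k₀λ} ( Σ_{k=−∞}^{k₀} 2^{kαp} ( Σ_{j=−∞}^{k} 2^{(j−k)d} a_j )^p )^{1/p} ≤ C · sup_{k₀∈ℤ} 2^{−k₀λ} ( Σ_{k=−∞}^{k₀} 2^{kαp} a_k^p )^{1/p}. (This is the discrete summation estimate underlying the proof of Theorem 3.1.) -/
/-!
Writing the inner sum as `∑_{i ≥ 0} 2^{-id} a_{k-i}` and splitting `2^{-id} = 2^{-iδ} 2^{-i(d-δ)}`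
with `δ = (λ + d - α)/2 > 0`, Hölder's inequality (for `p > 1`) or the subadditivity of `x ↦ x^p`
(for `p ≤ 1`) gives `(∑_i 2^{-id} a_{k-i})^p ≲ ∑_i 2^{-i(d-δ)p} a_{k-i}^p`. Summing against
`2^{kαp}` over `k ≤ k₀` and exchanging the sums, the `i`-th term is the right-hand side's partial
sum at level `k₀ - i`, shifted; it is at most `2^{iαp} 2^{(k₀-i)λp}` times the `p`-th power of the
right-hand side. What remains is the geometric series `∑_i 2^{-iδp}`.
-/

open ENNReal

theorem ENNReal.rpow_tsum_le_tsum_rpow {ι : Type*} (f : ι → ℝ≥0∞) {p : ℝ} (hp0 : 0 < p)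
    (hp1 : p ≤ 1) : (∑' i, f i) ^ p ≤ ∑' i, f i ^ p := by
  have hmono : Monotone fun x : ℝ≥0∞ => x ^ p := fun _ _ h => rpow_le_rpow h hp0.le
  rw [ENNReal.tsum_eq_iSup_sum, hmono.map_iSup_of_continuousAt
    ENNReal.continuous_rpow_const.continuousAt (zero_rpow_of_pos hp0)]
  refine iSup_le fun s => le_trans ?_ (ENNReal.sum_le_tsum s)
  induction s using Finset.cons_induction with
  | empty => simp [zero_rpow_of_pos hp0]
  | cons a s _ ih =>
    rw [Finset.sum_cons, Finset.sum_cons]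
    exact (rpow_add_le_add_rpow _ _ hp0.le hp1).trans (by gcongr)

theorem ENNReal.inner_le_Lp_mul_Lq_tsum {ι : Type*} [Countable ι] {p q : ℝ}
    (hpq : p.HolderConjugate q) (f g : ι → ℝ≥0∞) :
    ∑' i, f i * g i ≤ (∑' i, f i ^ p) ^ (1 / p) * (∑' i, g i ^ q) ^ (1 / q) := by
  let : MeasurableSpace ι := ⊤
  simpa [MeasureTheory.lintegral_count] using
    lintegral_mul_le_Lp_mul_Lq MeasureTheory.Measure.count hpq
      (measurable_of_countable f).aemeasurable (measurable_of_countable g).aemeasurable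

theorem ENNReal.exists_rpow_tsum_geometric_mul_le {r : ℝ≥0∞} (hr : r < 1) {p : ℝ} (hp : 0 < p) :
    ∃ C ≠ ∞, ∀ g : ℕ → ℝ≥0∞, (∑' i, r ^ i * g i) ^ p ≤ C * ∑' i, g i ^ p := by
  rcases le_or_gt p 1 with hp1 | hp1
  · refine ⟨1, one_ne_top, fun g => ?_⟩
    calc (∑' i, r ^ i * g i) ^ p ≤ ∑' i, (r ^ i) ^ p * g i ^ p := by
          simpa only [mul_rpow_of_nonneg _ _ hp.le]
            using rpow_tsum_le_tsum_rpow (fun i => r ^ i * g i) hp hp1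
      _ ≤ 1 * ∑' i, g i ^ p := by
          rw [one_mul]
          gcongr with i
          exact mul_le_of_le_one_left' (rpow_le_one (pow_le_one₀ bot_le hr.le) hp.le)
  · set q := p.conjExponent
    have hpq : p.HolderConjugate q := .conjExponent hp1
    have hq : 0 < q := hpq.symm.pos
    have hgeom : ∀ i : ℕ, (r ^ i) ^ q = (r ^ q) ^ i := fun i => by
      rw [← rpow_natCast, ← rpow_natCast, ← rpow_mul, ← rpow_mul, mul_comm]
    refine ⟨(∑' i : ℕ, (r ^ i) ^ q) ^ (p / q),
      rpow_ne_top_of_nonneg (div_pos hp hq).le ?_, fun g => ?_⟩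
    · simpa only [hgeom, ← lt_top_iff_ne_top, tsum_geometric_lt_top] using rpow_lt_one hr hq
    calc (∑' i, r ^ i * g i) ^ p
        ≤ ((∑' i : ℕ, (r ^ i) ^ q) ^ (1 / q) * (∑' i, g i ^ p) ^ (1 / p)) ^ p := by
          gcongr
          exact inner_le_Lp_mul_Lq_tsum hpq.symm _ _
      _ = (∑' i : ℕ, (r ^ i) ^ q) ^ (p / q) * ∑' i, g i ^ p := by
          rw [mul_rpow_of_nonneg _ _ hp.le, ← rpow_mul, ← rpow_mul, one_div_mul_cancel hp.ne',
            rpow_one, one_div_mul_eq_div]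

theorem two_rpow_add (x y : ℝ) : (2 : ℝ≥0∞) ^ (x + y) = 2 ^ x * 2 ^ y :=
  rpow_add x y two_ne_zero ofNat_ne_top

theorem two_rpow_neg_mul_natCast (x : ℝ) (i : ℕ) :
    (2 : ℝ≥0∞) ^ (-(i : ℝ) * x) = (2 ^ (-x)) ^ i := by
  rw [← rpow_natCast, ← rpow_mul]
  ring_nf

theorem two_rpow_neg_lt_one {x : ℝ} (hx : 0 < x) : (2 : ℝ≥0∞) ^ (-x) < 1 :=
  rpow_lt_one_of_one_lt_of_neg one_lt_two (neg_neg_of_pos hx)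

theorem tsum_subtype_le_eq_tsum_nat {M : Type*} [AddCommMonoid M] [TopologicalSpace M]
    (g : ℤ → M) (k : ℤ) : ∑' j : {j : ℤ // j ≤ k}, g j = ∑' i : ℕ, g (k - i) := by
  let e : ℕ ≃ {j : ℤ // j ≤ k} :=
    { toFun i := ⟨k - i, by omega⟩
      invFun j := (k - j).toNat
      left_inv i := by simp
      right_inv j := by ext; have := j.2; simp; omega }
  exact (e.tsum_eq fun j => g j).symm

noncomputable def herzMorreySum (α p : ℝ) (f : ℤ → ℝ≥0∞) (K : ℤ) : ℝ≥0∞ :=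
  ∑' k : {k : ℤ // k ≤ K}, (2 : ℝ≥0∞) ^ (((k : ℤ) : ℝ) * α * p) * f k ^ p

noncomputable def herzMorreyNorm (lam α p : ℝ) (f : ℤ → ℝ≥0∞) : ℝ≥0∞ :=
  ⨆ K : ℤ, (2 : ℝ≥0∞) ^ (-(K : ℝ) * lam) * herzMorreySum α p f K ^ (1 / p)

noncomputable def dyadicLowerSum (d : ℝ) (f : ℤ → ℝ≥0∞) (k : ℤ) : ℝ≥0∞ :=
  ∑' j : {j : ℤ // j ≤ k}, (2 : ℝ≥0∞) ^ ((((j : ℤ) - k : ℤ) : ℝ) * d) * f j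

theorem herzMorreySum_comp_sub (α p : ℝ) (f : ℤ → ℝ≥0∞) (K i : ℤ) :
    herzMorreySum α p (fun k => f (k - i)) K =
      2 ^ ((i : ℝ) * α * p) * herzMorreySum α p f (K - i) := by
  let e : {k : ℤ // k ≤ K} ≃ {m : ℤ // m ≤ K - i} :=
    (Equiv.subRight i).subtypeEquiv fun k => by simp
  rw [herzMorreySum, herzMorreySum, ← e.tsum_eq, ← ENNReal.tsum_mul_left]
  refine tsum_congr fun k => ?_
  simp only [e, Equiv.subtypeEquiv_apply, Equiv.subRight_apply, ← mul_assoc, ← two_rpow_add]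
  push_cast
  ring_nf

theorem herzMorreyNorm_le_iff {lam α p : ℝ} (hp : 0 < p) {f : ℤ → ℝ≥0∞} {B : ℝ≥0∞} :
    herzMorreyNorm lam α p f ≤ B ↔
      ∀ K : ℤ, herzMorreySum α p f K ≤ (2 ^ ((K : ℝ) * lam) * B) ^ p := by
  refine iSup_le_iff.trans (forall_congr' fun K => ?_)
  rw [neg_mul, rpow_neg, ENNReal.inv_mul_le_iff (by positivity) (by simp), one_div,
    rpow_inv_le_iff hp]

theorem exists_dyadicLowerSum_rpow_le {c d p : ℝ} (hcd : c < d) (hp : 0 < p) :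
    ∃ C ≠ ∞, ∀ f k, dyadicLowerSum d f k ^ p ≤
      C * ∑' i : ℕ, 2 ^ (-(i : ℝ) * c * p) * f (k - i) ^ p := by
  obtain ⟨C, hC, hgeom⟩ :=
    exists_rpow_tsum_geometric_mul_le (two_rpow_neg_lt_one (sub_pos.2 hcd)) hp
  refine ⟨C, hC, fun f k => ?_⟩
  have hsplit : ∀ i : ℕ, (2 : ℝ≥0∞) ^ ((((k - i : ℤ) - k : ℤ) : ℝ) * d) * f (k - i) =
      (2 ^ (-(d - c))) ^ i * (2 ^ (-(i : ℝ) * c) * f (k - i)) := fun i => by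
    rw [← two_rpow_neg_mul_natCast, ← mul_assoc, ← two_rpow_add]
    push_cast
    ring_nf
  rw [dyadicLowerSum, tsum_subtype_le_eq_tsum_nat (fun j => 2 ^ (((j - k : ℤ) : ℝ) * d) * f j)]
  simpa only [hsplit, mul_rpow_of_nonneg _ _ hp.le, ← rpow_mul]
    using hgeom fun i => 2 ^ (-(i : ℝ) * c) * f (k - i)

theorem exists_herzMorreySum_dyadicLowerSum_le {lam α p d : ℝ} (hp : 0 < p)
    (hα : α < lam + d) :
    ∃ C ≠ ∞, ∀ f K, herzMorreySum α p (dyadicLowerSum d f) K ≤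
      C * (2 ^ ((K : ℝ) * lam) * herzMorreyNorm lam α p f) ^ p := by
  -- Half of the spare decay `lam + d - α` pays for Hölder, the other half for the sum over shifts.
  set δ := (lam + d - α) / 2 with hδ
  obtain ⟨C₀, hC₀, hconv⟩ := exists_dyadicLowerSum_rpow_le (show d - δ < d by linarith) hp
  set r : ℝ≥0∞ := 2 ^ (-(δ * p))
  have hr : ∑' i : ℕ, r ^ i ≠ ∞ :=
    (tsum_geometric_lt_top.2 (two_rpow_neg_lt_one (by positivity))).ne
  refine ⟨C₀ * ∑' i : ℕ, r ^ i, mul_ne_top hC₀ hr, fun f K => ?_⟩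
  set M := herzMorreyNorm lam α p f
  have hterm : ∀ i : ℕ, (2 : ℝ≥0∞) ^ (-(i : ℝ) * (d - δ) * p) *
      (2 ^ (((i : ℤ) : ℝ) * α * p) * (2 ^ (((K - i : ℤ) : ℝ) * lam) * M) ^ p) =
      r ^ i * (2 ^ ((K : ℝ) * lam) * M) ^ p := fun i => by
    rw [mul_rpow_of_nonneg _ _ hp.le, mul_rpow_of_nonneg _ _ hp.le, ← rpow_mul, ← rpow_mul,
      ← two_rpow_neg_mul_natCast, ← mul_assoc, ← mul_assoc, ← two_rpow_add, ← two_rpow_add,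
      ← mul_assoc, ← two_rpow_add]
    congr 2
    push_cast
    rw [hδ]
    ring
  calc herzMorreySum α p (dyadicLowerSum d f) K
      ≤ ∑' k : {k : ℤ // k ≤ K}, 2 ^ (((k : ℤ) : ℝ) * α * p) *
          (C₀ * ∑' i : ℕ, 2 ^ (-(i : ℝ) * (d - δ) * p) * f (k - i) ^ p) :=
        ENNReal.tsum_le_tsum fun k => by gcongr; exact hconv f k
    _ = C₀ * ∑' i : ℕ, 2 ^ (-(i : ℝ) * (d - δ) * p) *
          herzMorreySum α p (fun k => f (k - i)) K := by
        simp only [herzMorreySum, ← ENNReal.tsum_mul_left]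
        rw [ENNReal.tsum_comm]
        exact tsum_congr fun i => tsum_congr fun k => by ring
    _ ≤ C₀ * ∑' i : ℕ, 2 ^ (-(i : ℝ) * (d - δ) * p) *
          (2 ^ (((i : ℤ) : ℝ) * α * p) * (2 ^ (((K - i : ℤ) : ℝ) * lam) * M) ^ p) := by
        simp only [herzMorreySum_comp_sub]
        gcongr with i
        exact (herzMorreyNorm_le_iff hp).1 le_rfl _
    _ = C₀ * (∑' i : ℕ, r ^ i) * (2 ^ ((K : ℝ) * lam) * M) ^ p := by
        simp_rw [hterm]
        rw [ENNReal.tsum_mul_right, mul_assoc]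

theorem exists_herzMorreyNorm_dyadicLowerSum_le {lam α p d : ℝ} (hp : 0 < p)
    (hα : α < lam + d) :
    ∃ C ≠ ∞, ∀ f, herzMorreyNorm lam α p (dyadicLowerSum d f) ≤ C * herzMorreyNorm lam α p f := by
  obtain ⟨C, hC, hsum⟩ := exists_herzMorreySum_dyadicLowerSum_le hp hα
  refine ⟨C ^ (1 / p), rpow_ne_top_of_nonneg (by positivity) hC,
    fun f => (herzMorreyNorm_le_iff hp).2 fun K => ?_⟩
  calc _ ≤ C * (2 ^ ((K : ℝ) * lam) * herzMorreyNorm lam α p f) ^ p := hsum f K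
    _ = (2 ^ ((K : ℝ) * lam) * (C ^ (1 / p) * herzMorreyNorm lam α p f)) ^ p := by
        rw [mul_left_comm _ (C ^ (1 / p)), mul_rpow_of_nonneg (C ^ (1 / p)) _ hp.le, ← rpow_mul C,
          one_div_mul_cancel hp.ne', rpow_one]

theorem herzMorrey_discrete_estimate_lower_general
    (lam p d α : ℝ) (hp : 0 < p)
    (hα : α < lam + d) :
    ∃ C : ℝ, 0 < C ∧
      ∀ a : ℤ → ℝ, (∀ j, 0 ≤ a j) →
        (⨆ k₀ : ℤ, (2 : ℝ≥0∞) ^ (-(k₀ : ℝ) * lam) *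
          (∑' k : {k : ℤ // k ≤ k₀},
            (2 : ℝ≥0∞) ^ (((k : ℤ) : ℝ) * α * p) *
              (∑' j : {j : ℤ // j ≤ (k : ℤ)},
                (2 : ℝ≥0∞) ^ (((((j : ℤ) - k : ℤ)) : ℝ) * d) *
                  ENNReal.ofReal (a j)) ^ p) ^ (1 / p)) ≤
        ENNReal.ofReal C *
          (⨆ k₀ : ℤ, (2 : ℝ≥0∞) ^ (-(k₀ : ℝ) * lam) *
            (∑' k : {k : ℤ // k ≤ k₀},
              (2 : ℝ≥0∞) ^ (((k : ℤ) : ℝ) * α * p) *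
                ENNReal.ofReal (a k) ^ p) ^ (1 / p)) := by
  obtain ⟨C, hC, hbound⟩ := exists_herzMorreyNorm_dyadicLowerSum_le hp hα
  refine ⟨C.toReal + 1, by positivity, fun a _ => ?_⟩
  calc _ ≤ C * herzMorreyNorm lam α p fun j => ENNReal.ofReal (a j) := hbound _
    _ ≤ ENNReal.ofReal (C.toReal + 1) * herzMorreyNorm lam α p fun j => ENNReal.ofReal (a j) := by
        gcongr
        exact (le_ofReal_iff_toReal_le hC (by positivity)).2 (by linarith)

/-- The discrete summation estimate underlying the proof of Theorem 3.1: for `λ ≥ 0`,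
`0 < p < ∞`, `d > 0` and `α < λ + d`, the Herz–Morrey type quantity of the sequence
`k ↦ Σ_{j≤k} 2^{(j−k)d} a_j` is controlled by that of `(a_k)`, in `[0,∞]`. -/
theorem herzMorrey_discrete_estimate_lower
    (lam p d α : ℝ) (hlam : 0 ≤ lam) (hp : 0 < p) (hd : 0 < d)
    (hα : α < lam + d) :
    ∃ C : ℝ, 0 < C ∧
      ∀ a : ℤ → ℝ, (∀ j, 0 ≤ a j) →
        (⨆ k₀ : ℤ, (2 : ℝ≥0∞) ^ (-(k₀ : ℝ) * lam) *
          (∑' k : {k : ℤ // k ≤ k₀},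
            (2 : ℝ≥0∞) ^ (((k : ℤ) : ℝ) * α * p) *
              (∑' j : {j : ℤ // j ≤ (k : ℤ)},
                (2 : ℝ≥0∞) ^ (((((j : ℤ) - k : ℤ)) : ℝ) * d) *
                  ENNReal.ofReal (a j)) ^ p) ^ (1 / p)) ≤
        ENNReal.ofReal C *
          (⨆ k₀ : ℤ, (2 : ℝ≥0∞) ^ (-(k₀ : ℝ) * lam) *
            (∑' k : {k : ℤ // k ≤ k₀},
              (2 : ℝ≥0∞) ^ (((k : ℤ) : ℝ) * α * p) *
                ENNReal.ofReal (a k) ^ p) ^ (1 / p)) :=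
  herzMorrey_discrete_estimate_lower_general lam p d α hp hα
end

section
/- Let λ ≥ 0, 0 < p < ∞, d > 0, and α > λ − d. Then there exists a constant C > 0 (depending only on λ, p, d, α) such that for every sequence (a_j)_{j∈ℤ} of nonnegative reals, sup_{k₀∈ℤ} 2^{−k₀λ} ( Σ_{k=−∞}^{k₀} 2^{kαp} ( Σ_{j=k+1}^{∞} 2^{(k−j)d} a_j )^p )^{1/p} ≤ C · sup_{k₀∈ℤ} 2^{−k₀λ} ( Σ_{k=−∞}^{k₀} 2^{kαp} a_k^p )^{1/p}. (This is the discrete summation estimate underlying the proof of Theorem 3.2.) -/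
/-!
Write `d = ε + δ` with `ε = (α + d - λ) / 2 > 0`. Pulling `sup_m 2^{-mδ} a_{k+m}` out of the tail
sum `b_k = Σ_{m ≥ 1} 2^{-md} a_{k+m}` gives `b_k^p ≤ G_ε^p Σ_{m ≥ 1} 2^{-mδp} a_{k+m}^p` for every
`p > 0`, where `G_ε = Σ_{m ≥ 1} 2^{-mε}`. Summing against `2^{kαp}` over `k ≤ k₀` and exchanging
the sums, the inner sum over `k` is a partial sum of `(a_k)` up to `k₀ + m`, hence at most
`2^{-mαp} 2^{(k₀ + m)λp} M^p` with `M` the right-hand supremum. What remains is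
`Σ_{m ≥ 1} 2^{-m(α + δ - λ)p} = Σ_{m ≥ 1} 2^{-mεp} < ∞`.
-/

open ENNReal

namespace HerzMorrey

lemma two_rpow_add (x y : ℝ) : (2 : ℝ≥0∞) ^ (x + y) = 2 ^ x * 2 ^ y :=
  rpow_add x y two_ne_zero ofNat_ne_top

noncomputable def weightedPartialSum (α p : ℝ) (f : ℤ → ℝ≥0∞) (n : ℤ) : ℝ≥0∞ :=
  ∑' k : {k : ℤ // k ≤ n}, (2 : ℝ≥0∞) ^ (((k : ℤ) : ℝ) * α * p) * f k ^ p

noncomputable def discreteHerzMorrey (lam α p : ℝ) (f : ℤ → ℝ≥0∞) : ℝ≥0∞ :=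
  ⨆ n : ℤ, (2 : ℝ≥0∞) ^ (-(n : ℝ) * lam) * weightedPartialSum α p f n ^ (1 / p)

noncomputable def tailSum (d : ℝ) (f : ℤ → ℝ≥0∞) (k : ℤ) : ℝ≥0∞ :=
  ∑' j : {j : ℤ // k + 1 ≤ j}, (2 : ℝ≥0∞) ^ (((k - j : ℤ) : ℝ) * d) * f j

noncomputable def geomTail (θ : ℝ) : ℝ≥0∞ :=
  ∑' m : ℕ, (2 : ℝ≥0∞) ^ (-((m : ℝ) + 1) * θ)

lemma geomTail_ne_top {θ : ℝ} (hθ : 0 < θ) : geomTail θ ≠ ⊤ := by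
  have hr : (2 : ℝ≥0∞) ^ (-θ) < 1 := rpow_lt_one_of_one_lt_of_neg one_lt_two (neg_neg_of_pos hθ)
  have h : geomTail θ = 2 ^ (-θ) * (1 - 2 ^ (-θ))⁻¹ := by
    rw [geomTail, ← tsum_geometric, ← ENNReal.tsum_mul_left]
    refine tsum_congr fun m => ?_
    rw [← rpow_natCast, ← rpow_mul, ← two_rpow_add]
    ring_nf
  rw [h]
  exact mul_ne_top (rpow_ne_top_of_nonneg' two_pos ofNat_ne_top)
    (inv_ne_top.2 (tsub_pos_of_lt hr).ne')

/-- Bounding every `y i` by `‖y‖_p` works for all `p > 0`, with no Hölder/concavity case split. -/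
lemma tsum_mul_rpow_le {ι : Type*} (w y : ι → ℝ≥0∞) {p : ℝ} (hp : 0 < p) :
    (∑' i, w i * y i) ^ p ≤ (∑' i, w i) ^ p * ∑' i, y i ^ p := by
  set S := (∑' i, y i ^ p) ^ p⁻¹
  have hy : ∀ i, y i ≤ S := fun i =>
    calc y i = (y i ^ p) ^ p⁻¹ := (rpow_rpow_inv hp.ne' _).symm
      _ ≤ S := rpow_le_rpow (ENNReal.le_tsum i) (inv_nonneg.2 hp.le)
  calc (∑' i, w i * y i) ^ p ≤ ((∑' i, w i) * S) ^ p := by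
        rw [← ENNReal.tsum_mul_right]
        exact rpow_le_rpow (ENNReal.tsum_le_tsum fun i => by gcongr; exact hy i) hp.le
    _ = (∑' i, w i) ^ p * ∑' i, y i ^ p := by
        rw [mul_rpow_of_nonneg _ _ hp.le, rpow_inv_rpow hp.ne']

def natEquivIci (n : ℤ) : ℕ ≃ {j : ℤ // n ≤ j} where
  toFun m := ⟨n + m, by omega⟩
  invFun j := (j - n).toNat
  left_inv m := by simp
  right_inv j := by ext; have := j.2; simp; omega

lemma tsum_Ici_eq_tsum_nat {M : Type*} [AddCommMonoid M] [TopologicalSpace M] (n : ℤ)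
    (g : ℤ → M) : ∑' j : {j : ℤ // n ≤ j}, g j = ∑' m : ℕ, g (n + m) :=
  ((natEquivIci n).tsum_eq fun j => g j).symm

lemma tsum_Iic_comp_add {M : Type*} [AddCommMonoid M] [TopologicalSpace M] (n s : ℤ)
    (g : ℤ → M) : ∑' k : {k : ℤ // k ≤ n}, g (k + s) = ∑' i : {i : ℤ // i ≤ n + s}, g i :=
  (Equiv.subtypeEquiv (p := (· ≤ n)) (q := (· ≤ n + s)) (Equiv.addRight s) fun k => by simp).tsum_eq
    fun i => g i

lemma tailSum_eq (d : ℝ) (f : ℤ → ℝ≥0∞) (k : ℤ) :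
    tailSum d f k = ∑' m : ℕ, (2 : ℝ≥0∞) ^ (-((m : ℝ) + 1) * d) * f (k + (m + 1)) := by
  refine (tsum_Ici_eq_tsum_nat (k + 1) fun j => (2 : ℝ≥0∞) ^ (((k - j : ℤ) : ℝ) * d) * f j).trans
    (tsum_congr fun m => ?_)
  rw [show k + 1 + (m : ℤ) = k + (m + 1) by ring]
  push_cast
  ring_nf

lemma tailSum_rpow_le (ε δ : ℝ) {p : ℝ} (hp : 0 < p) (f : ℤ → ℝ≥0∞) (k : ℤ) :
    tailSum (ε + δ) f k ^ p ≤
      geomTail ε ^ p * ∑' m : ℕ, (2 : ℝ≥0∞) ^ (-((m : ℝ) + 1) * (δ * p)) * f (k + (m + 1)) ^ p := by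
  have hsplit : ∀ m : ℕ, (2 : ℝ≥0∞) ^ (-((m : ℝ) + 1) * (ε + δ)) * f (k + (m + 1)) =
      2 ^ (-((m : ℝ) + 1) * ε) * (2 ^ (-((m : ℝ) + 1) * δ) * f (k + (m + 1))) := by
    intro m
    rw [← mul_assoc, ← two_rpow_add]
    ring_nf
  rw [tailSum_eq, tsum_congr hsplit, geomTail]
  refine (tsum_mul_rpow_le _ _ hp).trans_eq ?_
  congr 2 with m
  rw [mul_rpow_of_nonneg _ _ hp.le, ← rpow_mul, mul_assoc]

lemma weightedPartialSum_comp_add (α p : ℝ) (f : ℤ → ℝ≥0∞) (n s : ℤ) :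
    weightedPartialSum α p (fun k => f (k + s)) n =
      2 ^ (-(s : ℝ) * α * p) * weightedPartialSum α p f (n + s) := by
  rw [weightedPartialSum, weightedPartialSum, ← ENNReal.tsum_mul_left]
  refine .trans ?_ (tsum_Iic_comp_add n s fun i =>
    (2 : ℝ≥0∞) ^ (-(s : ℝ) * α * p) * (2 ^ ((i : ℝ) * α * p) * f i ^ p))
  refine tsum_congr fun k => ?_
  rw [← mul_assoc, ← two_rpow_add]
  push_cast
  ring_nf

lemma weightedPartialSum_le {lam α p : ℝ} (hp : 0 < p) (f : ℤ → ℝ≥0∞) (n : ℤ) :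
    weightedPartialSum α p f n ≤ 2 ^ ((n : ℝ) * lam * p) * discreteHerzMorrey lam α p f ^ p := by
  have hterm : 2 ^ (-(n : ℝ) * lam) * weightedPartialSum α p f n ^ (1 / p) ≤
      discreteHerzMorrey lam α p f :=
    le_iSup (fun n : ℤ => (2 : ℝ≥0∞) ^ (-(n : ℝ) * lam) * weightedPartialSum α p f n ^ (1 / p)) n
  have hroot : weightedPartialSum α p f n ^ (1 / p) ≤
      2 ^ ((n : ℝ) * lam) * discreteHerzMorrey lam α p f :=
    calc weightedPartialSum α p f n ^ (1 / p)
        = 2 ^ ((n : ℝ) * lam) * (2 ^ (-(n : ℝ) * lam) * weightedPartialSum α p f n ^ (1 / p)) := by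
          rw [← mul_assoc, ← two_rpow_add, show (n : ℝ) * lam + -(n : ℝ) * lam = 0 by ring,
            rpow_zero, one_mul]
      _ ≤ 2 ^ ((n : ℝ) * lam) * discreteHerzMorrey lam α p f := by gcongr
  calc weightedPartialSum α p f n = (weightedPartialSum α p f n ^ (1 / p)) ^ p := by
        rw [one_div, rpow_inv_rpow hp.ne']
    _ ≤ (2 ^ ((n : ℝ) * lam) * discreteHerzMorrey lam α p f) ^ p := by gcongr
    _ = 2 ^ ((n : ℝ) * lam * p) * discreteHerzMorrey lam α p f ^ p := by
        rw [mul_rpow_of_nonneg _ _ hp.le, ← rpow_mul]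

lemma discreteHerzMorrey_le {lam α p : ℝ} (hp : 0 < p) {g : ℤ → ℝ≥0∞} {K M : ℝ≥0∞}
    (h : ∀ n : ℤ, weightedPartialSum α p g n ≤ K * (2 ^ ((n : ℝ) * lam * p) * M ^ p)) :
    discreteHerzMorrey lam α p g ≤ K ^ (1 / p) * M := by
  refine iSup_le fun n => ?_
  calc 2 ^ (-(n : ℝ) * lam) * weightedPartialSum α p g n ^ (1 / p)
      ≤ 2 ^ (-(n : ℝ) * lam) * (K * (2 ^ ((n : ℝ) * lam * p) * M ^ p)) ^ (1 / p) := by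
        gcongr
        exact h n
    _ = K ^ (1 / p) * M := by
        rw [mul_rpow_of_nonneg _ _ (by positivity), mul_rpow_of_nonneg _ _ (by positivity),
          ← rpow_mul, ← rpow_mul, mul_one_div_cancel hp.ne', rpow_one, mul_left_comm,
          ← mul_assoc (2 ^ _), ← two_rpow_add, mul_assoc _ p, mul_one_div_cancel hp.ne',
          mul_one, neg_mul, neg_add_cancel, rpow_zero, one_mul]

lemma weightedPartialSum_tailSum_le (lam α ε δ : ℝ) {p : ℝ} (hp : 0 < p) (f : ℤ → ℝ≥0∞)
    (n : ℤ) :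
    weightedPartialSum α p (tailSum (ε + δ) f) n ≤
      geomTail ε ^ p * geomTail ((α + δ - lam) * p) *
        (2 ^ ((n : ℝ) * lam * p) * discreteHerzMorrey lam α p f ^ p) := by
  set M := discreteHerzMorrey lam α p f
  calc weightedPartialSum α p (tailSum (ε + δ) f) n
      ≤ ∑' k : {k : ℤ // k ≤ n}, 2 ^ (((k : ℤ) : ℝ) * α * p) * (geomTail ε ^ p *
          ∑' m : ℕ, (2 : ℝ≥0∞) ^ (-((m : ℝ) + 1) * (δ * p)) * f (k + (m + 1)) ^ p) :=
        ENNReal.tsum_le_tsum fun k => by gcongr; exact tailSum_rpow_le ε δ hp f k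
    _ = geomTail ε ^ p * ∑' m : ℕ, 2 ^ (-((m : ℝ) + 1) * (δ * p)) *
          weightedPartialSum α p (fun k => f (k + (m + 1))) n := by
        simp_rw [weightedPartialSum, ← ENNReal.tsum_mul_left]
        rw [ENNReal.tsum_comm]
        congr 1 with m
        congr 1 with k
        ring
    _ ≤ geomTail ε ^ p * ∑' m : ℕ, 2 ^ (-((m : ℝ) + 1) * (δ * p)) *
          (2 ^ (-((m : ℝ) + 1) * α * p) * (2 ^ (((n + (m + 1) : ℤ) : ℝ) * lam * p) * M ^ p)) := by
        gcongr with m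
        rw [weightedPartialSum_comp_add]
        push_cast
        gcongr
        exact_mod_cast weightedPartialSum_le hp f _
    _ = geomTail ε ^ p * geomTail ((α + δ - lam) * p) * (2 ^ ((n : ℝ) * lam * p) * M ^ p) := by
        rw [mul_assoc, geomTail.eq_def ((α + δ - lam) * p), ← ENNReal.tsum_mul_right]
        refine congrArg _ (tsum_congr fun m => ?_)
        simp only [← mul_assoc, ← two_rpow_add]
        push_cast
        ring_nf

end HerzMorrey

open HerzMorrey in
theorem herzMorrey_discrete_estimate_upper_general
    (lam p d α : ℝ) (hp : 0 < p)
    (hα : lam - d < α) :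
    ∃ C : ℝ, 0 < C ∧
      ∀ a : ℤ → ℝ, (∀ j, 0 ≤ a j) →
        (⨆ k₀ : ℤ, (2 : ℝ≥0∞) ^ (-(k₀ : ℝ) * lam) *
          (∑' k : {k : ℤ // k ≤ k₀},
            (2 : ℝ≥0∞) ^ (((k : ℤ) : ℝ) * α * p) *
              (∑' j : {j : ℤ // (k : ℤ) + 1 ≤ j},
                (2 : ℝ≥0∞) ^ ((((k : ℤ) - (j : ℤ) : ℤ) : ℝ) * d) *
                  ENNReal.ofReal (a j)) ^ p) ^ (1 / p)) ≤
        ENNReal.ofReal C *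
          (⨆ k₀ : ℤ, (2 : ℝ≥0∞) ^ (-(k₀ : ℝ) * lam) *
            (∑' k : {k : ℤ // k ≤ k₀},
              (2 : ℝ≥0∞) ^ (((k : ℤ) : ℝ) * α * p) *
                ENNReal.ofReal (a k) ^ p) ^ (1 / p)) := by
  set ε := (α + d - lam) / 2
  have hε : 0 < ε := by simp only [ε]; linarith
  have hd : d = ε + (d - ε) := by ring
  have hrate : (α + (d - ε) - lam) * p = ε * p := by simp only [ε]; ring
  set K := (geomTail ε ^ p * geomTail (ε * p)) ^ (1 / p)
  have hK : K ≠ ⊤ := rpow_ne_top_of_nonneg (by positivity) <|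
    mul_ne_top (rpow_ne_top_of_nonneg hp.le (geomTail_ne_top hε))
      (geomTail_ne_top (mul_pos hε hp))
  refine ⟨K.toReal + 1, by positivity, fun a _ => ?_⟩
  have hKC : K ≤ ENNReal.ofReal (K.toReal + 1) :=
    (ofReal_toReal hK).symm.le.trans (ofReal_le_ofReal (by linarith))
  calc discreteHerzMorrey lam α p (tailSum d fun j => ENNReal.ofReal (a j))
      ≤ K * discreteHerzMorrey lam α p (fun j => ENNReal.ofReal (a j)) :=
        discreteHerzMorrey_le hp fun n => by
          simpa only [← hd, hrate] using weightedPartialSum_tailSum_le lam α ε (d - ε) hp _ n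
    _ ≤ _ := mul_le_mul_of_nonneg_right hKC zero_le

/-- The discrete summation estimate underlying the proof of Theorem 3.2: for `λ ≥ 0`,
`0 < p < ∞`, `d > 0` and `α > λ − d`, the Herz–Morrey type quantity of the sequence
`k ↦ Σ_{j≥k+1} 2^{(k−j)d} a_j` is controlled by that of `(a_k)`, in `[0,∞]`. -/
theorem herzMorrey_discrete_estimate_upper
    (lam p d α : ℝ) (hlam : 0 ≤ lam) (hp : 0 < p) (hd : 0 < d)
    (hα : lam - d < α) :
    ∃ C : ℝ, 0 < C ∧
      ∀ a : ℤ → ℝ, (∀ j, 0 ≤ a j) →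
        (⨆ k₀ : ℤ, (2 : ℝ≥0∞) ^ (-(k₀ : ℝ) * lam) *
          (∑' k : {k : ℤ // k ≤ k₀},
            (2 : ℝ≥0∞) ^ (((k : ℤ) : ℝ) * α * p) *
              (∑' j : {j : ℤ // (k : ℤ) + 1 ≤ j},
                (2 : ℝ≥0∞) ^ ((((k : ℤ) - (j : ℤ) : ℤ) : ℝ) * d) *
                  ENNReal.ofReal (a j)) ^ p) ^ (1 / p)) ≤
        ENNReal.ofReal C *
          (⨆ k₀ : ℤ, (2 : ℝ≥0∞) ^ (-(k₀ : ℝ) * lam) *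
            (∑' k : {k : ℤ // k ≤ k₀},
              (2 : ℝ≥0∞) ^ (((k : ℤ) : ℝ) * α * p) *
                ENNReal.ofReal (a k) ^ p) ^ (1 / p)) :=
  herzMorrey_discrete_estimate_upper_general lam p d α hp hα
end
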